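/- Fix T > 0, let U := [−1,0] ∪ [1,2], and define V : [0,T] × ℝ → ℝ by V(t,x) := −e^{t−T} x if x ≤ 0 and V(t,x) := −e^{T−t} x if x > 0. Then V is a viscosity solution of the HJB equation −v_t(t,x) + sup_{u∈U} { −½ v_{xx}(t,x) x² u² + v_x(t,x) x u² − v_x(t,x) x u − v_x(t,x) x } = 0 on [0,T) × ℝ with v(T,x) = −x. That is: V is continuous, V(T,x) = −x for all x ∈ ℝ, and for every test function ψ : [0,T] × ℝ → ℝ that is continuously differentiable in t and twice continuously differentiable in x: (i) whenever V − ψ attains a global maximum at some (t,x) ∈ [0,T) × ℝ, one has −ψ_t(t,x) + sup_{u∈U}{ −½ ψ_{xx}(t,x) x² u² + ψ_x(t,x) x u² − ψ_x(t,x) x u − ψ_x(t,x) x } ≤ 0; (ii) whenever V − ψ attains a global minimum at some (t,x) ∈ [0,T) × ℝ, one has −ψ_t(t,x) + sup_{u∈U}{ −½ ψ_{xx}(t,x) x² u² + ψ_x(t,x) x u² − ψ_x(t,x) x u − ψ_x(t,x) x } ≥ 0. -/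

import Mathlib

/-!
In `x` the value function is linear on each half-line, so at a spatial extremum `x ≠ 0` of
`V − ψ` the test function satisfies `ψ_x x = V` (trivially also at `x = 0`), with `ψ_xx ≥ 0`
at a maximum and `ψ_xx ≤ 0` at a minimum. In `t` it solves `V_t = |V|`; since the extremum at
`t < T` only controls the right derivative, `ψ_t ≥ |V|` at a maximum and `ψ_t ≤ |V|` at a
minimum. With `p = ψ_x x`, the controlled term is `−½ ψ_xx x² u² + p (u² − u − 1)`, and
`|u² − u − 1| ≤ 1` on `U`, with the values `1` at `u = −1` and `−1` at `u = 1`. So the supremum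
is at most `|p| = |V|` when `ψ_xx ≥ 0` and at least `|V|` when `ψ_xx ≤ 0`, which gives both
viscosity inequalities.
-/

open Set

/-- The candidate value function of Example 5.3:
`V(t,x) = −e^{t−T} x` for `x ≤ 0` and `V(t,x) = −e^{T−t} x` for `x > 0`. -/
noncomputable def VEx3 (T : ℝ) : ℝ → ℝ → ℝ :=
  fun t x => if x ≤ 0 then -Real.exp (t - T) * x else -Real.exp (T - t) * x

/-- The control set `U = [−1,0] ∪ [1,2]` of Example 5.3. -/
def UEx3 : Set ℝ := Set.Icc (-1) 0 ∪ Set.Icc 1 2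

/-- The HJB operator of Example 5.3 evaluated on a smooth test function `ψ`:
`−ψ_t(t,x) + sup_{u∈U} { −½ ψ_{xx}(t,x) x² u² + ψ_x(t,x) x u² − ψ_x(t,x) x u − ψ_x(t,x) x }`. -/
noncomputable def HamEx3 (ψ : ℝ → ℝ → ℝ) (t x : ℝ) : ℝ :=
  -(deriv (fun s => ψ s x) t) +
    sSup ((fun u : ℝ =>
        -(1 / 2) * (deriv (deriv (fun y => ψ t y)) x) * x ^ 2 * u ^ 2
        + (deriv (fun y => ψ t y) x) * x * u ^ 2
        - (deriv (fun y => ψ t y) x) * x * u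
        - (deriv (fun y => ψ t y) x) * x) '' UEx3)

open Filter Topology

theorem HasDerivAt.nonpos_of_isMaxOn_Icc {f : ℝ → ℝ} {f' a b : ℝ} (hab : a < b)
    (hf : HasDerivAt f f' a) (h : IsMaxOn f (Icc a b) a) : f' ≤ 0 := by
  have hcone : b - a ∈ posTangentConeAt (Icc a b) a :=
    mem_posTangentConeAt_of_segment_subset (by rw [add_sub_cancel, segment_eq_Icc hab.le])
  have := h.localize.hasFDerivWithinAt_nonpos hf.hasFDerivAt.hasFDerivWithinAt hcone
  simp only [ContinuousLinearMap.toSpanSingleton_apply, smul_eq_mul] at this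
  nlinarith

theorem HasDerivAt.nonneg_of_isMinOn_Icc {f : ℝ → ℝ} {f' a b : ℝ} (hab : a < b)
    (hf : HasDerivAt f f' a) (h : IsMinOn f (Icc a b) a) : 0 ≤ f' :=
  neg_nonpos.mp (hf.neg.nonpos_of_isMaxOn_Icc hab h.neg)

theorem deriv_deriv_eq_zero_of_isLocalMin_of_isLocalMax {f : ℝ → ℝ} {x : ℝ}
    (hmin : IsLocalMin f x) (hmax : IsLocalMax f x) : deriv (deriv f) x = 0 := by
  have hconst : f =ᶠ[𝓝 x] fun _ => f x := by
    filter_upwards [hmin, hmax] with y hy₁ hy₂ using le_antisymm hy₂ hy₁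
  rw [hconst.deriv.deriv_eq]
  simp

/-- The second-derivative test `isLocalMin_of_deriv_deriv_pos` needs no differentiability, so
`f'' x > 0` would make `x` also a local minimum, hence `f` locally constant. -/
theorem IsLocalMax.deriv_deriv_nonpos {f : ℝ → ℝ} {x : ℝ} (h : IsLocalMax f x)
    (hf : ContinuousAt f x) : deriv (deriv f) x ≤ 0 := by
  by_contra! hpos
  exact hpos.ne' (deriv_deriv_eq_zero_of_isLocalMin_of_isLocalMax
    (isLocalMin_of_deriv_deriv_pos hpos h.deriv_eq_zero hf) h)

theorem IsLocalMin.deriv_deriv_nonneg {f : ℝ → ℝ} {x : ℝ} (h : IsLocalMin f x)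
    (hf : ContinuousAt f x) : 0 ≤ deriv (deriv f) x := by
  by_contra! hneg
  exact hneg.ne (deriv_deriv_eq_zero_of_isLocalMin_of_isLocalMax h
    (isLocalMax_of_deriv_deriv_neg hneg h.deriv_eq_zero hf))

section ConstMulSub

variable {φ : ℝ → ℝ} {c x : ℝ}

theorem deriv_const_mul_sub (hφ : Differentiable ℝ φ) :
    deriv (fun y => c * y - φ y) = fun y => c - deriv φ y := by
  funext y
  simpa using ((hasDerivAt_id y).const_mul c).fun_sub (hφ y).hasDerivAt |>.deriv

theorem IsLocalMax.deriv_eq_and_deriv_deriv_nonneg_of_const_mul_sub (hφ : Differentiable ℝ φ)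
    (h : IsLocalMax (fun y => c * y - φ y) x) :
    deriv φ x = c ∧ 0 ≤ deriv (deriv φ) x := by
  have h₁ := h.deriv_eq_zero
  have h₂ := h.deriv_deriv_nonpos (by have := hφ.continuous; fun_prop)
  rw [deriv_const_mul_sub hφ] at h₁ h₂
  rw [deriv_const_sub] at h₂
  constructor <;> linarith

theorem IsLocalMin.deriv_eq_and_deriv_deriv_nonpos_of_const_mul_sub (hφ : Differentiable ℝ φ)
    (h : IsLocalMin (fun y => c * y - φ y) x) :
    deriv φ x = c ∧ deriv (deriv φ) x ≤ 0 := by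
  have h₁ := h.deriv_eq_zero
  have h₂ := h.deriv_deriv_nonneg (by have := hφ.continuous; fun_prop)
  rw [deriv_const_mul_sub hφ] at h₁ h₂
  rw [deriv_const_sub] at h₂
  constructor <;> linarith

end ConstMulSub

open Real

section ValueFunction

variable (T t : ℝ) {x : ℝ}

theorem VEx3_of_nonpos (hx : x ≤ 0) : VEx3 T t x = -exp (t - T) * x := if_pos hx

theorem VEx3_of_pos (hx : 0 < x) : VEx3 T t x = -exp (T - t) * x := if_neg hx.not_ge

theorem VEx3_eq_min_max (x : ℝ) :
    VEx3 T t x = -exp (t - T) * min x 0 - exp (T - t) * max x 0 := by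
  rcases le_or_gt x 0 with hx | hx
  · rw [VEx3_of_nonpos T t hx, min_eq_left hx, max_eq_right hx]; ring
  · rw [VEx3_of_pos T t hx, min_eq_right hx.le, max_eq_left hx.le]; ring

theorem continuous_VEx3 : Continuous fun w : ℝ × ℝ => VEx3 T w.1 w.2 := by
  simp_rw [VEx3_eq_min_max]
  fun_prop

theorem VEx3_self (x : ℝ) : VEx3 T T x = -x := by
  rw [VEx3_eq_min_max, sub_self, exp_zero]
  linarith [min_add_max x 0]

theorem hasDerivAt_VEx3_time (x : ℝ) : HasDerivAt (fun s => VEx3 T s x) |VEx3 T t x| t := by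
  rcases le_or_gt x 0 with hx | hx
  · have hV : 0 ≤ -exp (t - T) * x := by nlinarith [exp_pos (t - T)]
    simp_rw [VEx3_of_nonpos _ _ hx, abs_of_nonneg hV]
    simpa using ((hasDerivAt_id t).sub_const T).exp.neg.mul_const x
  · have hV : -exp (T - t) * x < 0 := by nlinarith [exp_pos (T - t)]
    simp_rw [VEx3_of_pos _ _ hx, abs_of_neg hV]
    simpa using ((hasDerivAt_id t).const_sub T).exp.neg.mul_const x

theorem VEx3_eventuallyEq_linear (hx : x ≠ 0) : ∃ c, (VEx3 T t ·) =ᶠ[𝓝 x] (c * ·) := by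
  rcases hx.lt_or_gt with hx | hx
  · exact ⟨_, eventually_lt_nhds hx |>.mono fun y hy => VEx3_of_nonpos T t hy.le⟩
  · exact ⟨_, eventually_gt_nhds hx |>.mono fun y hy => VEx3_of_pos T t hy⟩

end ValueFunction

theorem isCompact_UEx3 : IsCompact UEx3 := isCompact_Icc.union isCompact_Icc

theorem neg_one_mem_UEx3 : (-1 : ℝ) ∈ UEx3 := .inl ⟨le_rfl, by norm_num⟩

theorem one_mem_UEx3 : (1 : ℝ) ∈ UEx3 := .inr ⟨le_rfl, by norm_num⟩

theorem abs_sq_sub_self_sub_one_le {u : ℝ} (hu : u ∈ UEx3) : |u ^ 2 - u - 1| ≤ 1 := by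
  rw [abs_le]
  rcases hu with ⟨h₁, h₂⟩ | ⟨h₁, h₂⟩ <;> constructor <;> nlinarith

noncomputable def controlSup (a b x : ℝ) : ℝ :=
  sSup ((fun u : ℝ => -(1 / 2) * a * x ^ 2 * u ^ 2 + b * x * u ^ 2 - b * x * u - b * x) '' UEx3)

theorem HamEx3_eq (ψ : ℝ → ℝ → ℝ) (t x : ℝ) :
    HamEx3 ψ t x = -deriv (fun s => ψ s x) t +
      controlSup (deriv (deriv (fun y => ψ t y)) x) (deriv (fun y => ψ t y) x) x :=
  rfl

section ControlSup

variable {a b x : ℝ}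

theorem controlSup_le_abs (h : 0 ≤ a * x ^ 2) : controlSup a b x ≤ |b * x| := by
  refine csSup_le (Set.Nonempty.image _ ⟨1, one_mem_UEx3⟩) ?_
  rintro _ ⟨u, hu, rfl⟩
  have hbound : b * x * (u ^ 2 - u - 1) ≤ |b * x| := calc
    _ ≤ |b * x| * |u ^ 2 - u - 1| := (le_abs_self _).trans (abs_mul _ _).le
    _ ≤ |b * x| := mul_le_of_le_one_right (abs_nonneg _) (abs_sq_sub_self_sub_one_le hu)
  nlinarith [sq_nonneg u]

theorem abs_le_controlSup (h : a * x ^ 2 ≤ 0) : |b * x| ≤ controlSup a b x := by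
  have hbdd := (isCompact_UEx3.image (f := fun u : ℝ =>
    -(1 / 2) * a * x ^ 2 * u ^ 2 + b * x * u ^ 2 - b * x * u - b * x) (by fun_prop)).bddAbove
  have hneg : -(1 / 2) * a * x ^ 2 + b * x ≤ controlSup a b x :=
    le_csSup hbdd ⟨-1, neg_one_mem_UEx3, by ring⟩
  have hpos : -(1 / 2) * a * x ^ 2 - b * x ≤ controlSup a b x :=
    le_csSup hbdd ⟨1, one_mem_UEx3, by ring⟩
  rw [abs_le']
  constructor <;> linarith

end ControlSup

section TestFunction

variable {T t x : ℝ} {φ : ℝ → ℝ}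

theorem abs_VEx3_le_deriv_of_isMaxOn (ht : t < T) (hφ : DifferentiableAt ℝ φ t)
    (h : IsMaxOn (fun s => VEx3 T s x - φ s) (Icc t T) t) : |VEx3 T t x| ≤ deriv φ t :=
  sub_nonpos.mp <| ((hasDerivAt_VEx3_time T t x).sub hφ.hasDerivAt).nonpos_of_isMaxOn_Icc ht h

theorem deriv_le_abs_VEx3_of_isMinOn (ht : t < T) (hφ : DifferentiableAt ℝ φ t)
    (h : IsMinOn (fun s => VEx3 T s x - φ s) (Icc t T) t) : deriv φ t ≤ |VEx3 T t x| :=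
  sub_nonneg.mp <| ((hasDerivAt_VEx3_time T t x).sub hφ.hasDerivAt).nonneg_of_isMinOn_Icc ht h

theorem deriv_mul_eq_VEx3_and_nonneg_of_isLocalMax (hφ : Differentiable ℝ φ)
    (h : IsLocalMax (fun y => VEx3 T t y - φ y) x) :
    deriv φ x * x = VEx3 T t x ∧ 0 ≤ deriv (deriv φ) x * x ^ 2 := by
  rcases eq_or_ne x 0 with rfl | hx
  · simp [VEx3_of_nonpos]
  obtain ⟨c, hc⟩ := VEx3_eventuallyEq_linear T t hx
  obtain ⟨hslope, hconvex⟩ :=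
    (h.congr (hc.sub EventuallyEq.rfl)).deriv_eq_and_deriv_deriv_nonneg_of_const_mul_sub hφ
  exact ⟨by rw [hslope, hc.eq_of_nhds], by positivity⟩

theorem deriv_mul_eq_VEx3_and_nonpos_of_isLocalMin (hφ : Differentiable ℝ φ)
    (h : IsLocalMin (fun y => VEx3 T t y - φ y) x) :
    deriv φ x * x = VEx3 T t x ∧ deriv (deriv φ) x * x ^ 2 ≤ 0 := by
  rcases eq_or_ne x 0 with rfl | hx
  · simp [VEx3_of_nonpos]
  obtain ⟨c, hc⟩ := VEx3_eventuallyEq_linear T t hx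
  obtain ⟨hslope, hconcave⟩ :=
    (h.congr (hc.sub EventuallyEq.rfl)).deriv_eq_and_deriv_deriv_nonpos_of_const_mul_sub hφ
  exact ⟨by rw [hslope, hc.eq_of_nhds], mul_nonpos_of_nonpos_of_nonneg hconcave (sq_nonneg x)⟩

end TestFunction

section Viscosity

variable {T t x : ℝ} {ψ : ℝ → ℝ → ℝ}

theorem HamEx3_nonpos (ht : t ∈ Ico 0 T) (hψt : DifferentiableAt ℝ (fun s => ψ s x) t)
    (hψx : Differentiable ℝ (fun y => ψ t y))
    (hmax : ∀ t' ∈ Icc 0 T, ∀ x', VEx3 T t' x' - ψ t' x' ≤ VEx3 T t x - ψ t x) :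
    HamEx3 ψ t x ≤ 0 := by
  have htime := abs_VEx3_le_deriv_of_isMaxOn ht.2 hψt fun s hs =>
    hmax s ⟨ht.1.trans hs.1, hs.2⟩ x
  obtain ⟨hslope, hconvex⟩ := deriv_mul_eq_VEx3_and_nonneg_of_isLocalMax hψx <|
    .of_forall (hmax t (Ico_subset_Icc_self ht))
  have hsup := controlSup_le_abs (b := deriv (fun y => ψ t y) x) hconvex
  rw [hslope] at hsup
  rw [HamEx3_eq]
  linarith

theorem HamEx3_nonneg (ht : t ∈ Ico 0 T) (hψt : DifferentiableAt ℝ (fun s => ψ s x) t)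
    (hψx : Differentiable ℝ (fun y => ψ t y))
    (hmin : ∀ t' ∈ Icc 0 T, ∀ x', VEx3 T t x - ψ t x ≤ VEx3 T t' x' - ψ t' x') :
    0 ≤ HamEx3 ψ t x := by
  have htime := deriv_le_abs_VEx3_of_isMinOn ht.2 hψt fun s hs =>
    hmin s ⟨ht.1.trans hs.1, hs.2⟩ x
  obtain ⟨hslope, hconcave⟩ := deriv_mul_eq_VEx3_and_nonpos_of_isLocalMin hψx <|
    .of_forall (hmin t (Ico_subset_Icc_self ht))
  have hsup := abs_le_controlSup (b := deriv (fun y => ψ t y) x) hconcave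
  rw [hslope] at hsup
  rw [HamEx3_eq]
  linarith

end Viscosity

theorem VEx3_viscosity_solution_general (T : ℝ) :
    Continuous (fun w : ℝ × ℝ => VEx3 T w.1 w.2) ∧
    (∀ x : ℝ, VEx3 T T x = -x) ∧
    (∀ ψ : ℝ → ℝ → ℝ,
      (∀ x, Differentiable ℝ (fun t => ψ t x)) →
      (∀ t, Differentiable ℝ (fun y => ψ t y)) →
      (∀ t, Differentiable ℝ (deriv (fun y => ψ t y))) →
      Continuous (fun w : ℝ × ℝ => deriv (fun s => ψ s w.2) w.1) →
      Continuous (fun w : ℝ × ℝ => deriv (fun y => ψ w.1 y) w.2) →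
      Continuous (fun w : ℝ × ℝ => deriv (deriv (fun y => ψ w.1 y)) w.2) →
      ((∀ t x, t ∈ Set.Ico 0 T →
          (∀ t' ∈ Set.Icc (0 : ℝ) T, ∀ x' : ℝ,
            VEx3 T t' x' - ψ t' x' ≤ VEx3 T t x - ψ t x) →
          HamEx3 ψ t x ≤ 0) ∧
       (∀ t x, t ∈ Set.Ico 0 T →
          (∀ t' ∈ Set.Icc (0 : ℝ) T, ∀ x' : ℝ,
            VEx3 T t x - ψ t x ≤ VEx3 T t' x' - ψ t' x') →
          0 ≤ HamEx3 ψ t x))) :=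
  ⟨continuous_VEx3 T, VEx3_self T, fun _ hψt hψx _ _ _ _ =>
    ⟨fun t x ht => HamEx3_nonpos ht (hψt x t) (hψx t),
     fun t x ht => HamEx3_nonneg ht (hψt x t) (hψx t)⟩⟩

/-- **Example 5.3.** The function `V` defined piecewise by
`V(t,x) = −e^{t−T} x` for `x ≤ 0` and `−e^{T−t} x` for `x > 0` is a viscosity solution
of the HJB equation on `[0,T) × ℝ` with terminal value `v(T,x) = −x`: it is continuous,
satisfies the terminal condition, and for every test function `ψ` of class `C^{1,2}`,
(i) at a global maximum of `V − ψ` on `[0,T] × ℝ` occurring at `(t,x) ∈ [0,T) × ℝ` the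
HJB operator is `≤ 0`, and (ii) at a global minimum it is `≥ 0`. -/
theorem VEx3_viscosity_solution (T : ℝ) (hT : 0 < T) :
    Continuous (fun w : ℝ × ℝ => VEx3 T w.1 w.2) ∧
    (∀ x : ℝ, VEx3 T T x = -x) ∧
    (∀ ψ : ℝ → ℝ → ℝ,
      (∀ x, Differentiable ℝ (fun t => ψ t x)) →
      (∀ t, Differentiable ℝ (fun y => ψ t y)) →
      (∀ t, Differentiable ℝ (deriv (fun y => ψ t y))) →
      Continuous (fun w : ℝ × ℝ => deriv (fun s => ψ s w.2) w.1) →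
      Continuous (fun w : ℝ × ℝ => deriv (fun y => ψ w.1 y) w.2) →
      Continuous (fun w : ℝ × ℝ => deriv (deriv (fun y => ψ w.1 y)) w.2) →
      ((∀ t x, t ∈ Set.Ico 0 T →
          (∀ t' ∈ Set.Icc (0 : ℝ) T, ∀ x' : ℝ,
            VEx3 T t' x' - ψ t' x' ≤ VEx3 T t x - ψ t x) →
          HamEx3 ψ t x ≤ 0) ∧
       (∀ t x, t ∈ Set.Ico 0 T →
          (∀ t' ∈ Set.Icc (0 : ℝ) T, ∀ x' : ℝ,
            VEx3 T t x - ψ t x ≤ VEx3 T t' x' - ψ t' x') →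
          0 ≤ HamEx3 ψ t x))) :=
  VEx3_viscosity_solution_general T
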